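/- Let n ≥ 2 be an integer, 0 < α < n, and 1 < p < q < ∞ with α/n = 1/p − 1/q. There exists a constant C = C(n, p, q, C₀) such that for every nonnegative f ∈ L^p(ℝ^{n+1}) with ‖f‖_{L^p} > 0, every integer ℓ with 0 ≤ ℓ ≤ η, and almost every (x,t) ∈ ℝ^{n+1}, (Δ_ℓ I_α f)(x,t) ≤ C θ_ℓ(x,t)^{1/p − 1/q} (M_η f)(x,t)^{p/q} ‖f‖_{L^p(ℝ^{n+1})}^{1 − p/q}. -/

import Mathlib

/-!
Split `Λ_ℓ` into the shells `Λ_{ℓj}`, on which the kernel is at most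
`2^{j(α-n)} 2^{(j-ℓ)(α/n-1)}`. The contribution of a shell is then bounded in two ways.
Up to the null set `{y = 0}` the shell is covered by its intersections with the cones `Γ^ν_η`,
each of which is one of the averages in `M^ν_η f`; this gives `2^{-ℓα/n} M_η f · 2^{j(α+α/n)}`.
Hölder's inequality on the shell gives `2^{ℓ/q} ‖f‖_{L^p(Λ_ℓ)} · 2^{-j(n+1)/q}` up to a constant.
The sum over `j` of the minimum of a geometric sequence growing in `j` and one decaying in `j` is
at most a constant times `a^θ b^{1-θ}` (split the sum where the two sequences cross), and for
`θ = p/q` the powers of `2^ℓ` cancel, leaving `‖f‖_{L^p(Λ_ℓ)}^{1-p/q} (M_η f)^{p/q} = θ_ℓ^{1/p-1/q} ‖f‖_p^{1-p/q} (M_η f)^{p/q}`.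
-/

open MeasureTheory ENNReal NNReal

noncomputable section

/-- `ℝ^{n+1}` as `ℝ^n × ℝ`. -/
abbrev Pt (n : ℕ) := EuclideanSpace ℝ (Fin n) × ℝ

/-- The open light cone `Λ = {(y,s) : |s| > |y|}`. -/
def lightCone (n : ℕ) : Set (Pt n) := {p | ‖p.1‖ < |p.2|}

/-- The integrand `f(x−y, t−s) (|s|+|y|)^{α−n} (|s|−|y|)^{α/n−1}`. -/
def ker (n : ℕ) (α : ℝ) (f : Pt n → ℝ) (z p : Pt n) : ℝ≥0∞ :=
  ENNReal.ofReal (f (z.1 - p.1, z.2 - p.2)) *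
    ENNReal.ofReal ((|p.2| + ‖p.1‖) ^ (α - n) * (|p.2| - ‖p.1‖) ^ (α / n - 1))

/-- The light-cone fractional integral `I_α f`. -/
def Iop (n : ℕ) (α : ℝ) (f : Pt n → ℝ) (z : Pt n) : ℝ≥0∞ :=
  ∫⁻ p in lightCone n, ker n α f z p

/-- The shifted cone shell `Λ_{ℓj}(x,t)`. -/
def shellAt (n : ℕ) (ℓ j : ℤ) (c : Pt n) : Set (Pt n) :=
  {p | (2:ℝ) ^ j ≤ |p.2 - c.2| + ‖p.1 - c.1‖ ∧ |p.2 - c.2| + ‖p.1 - c.1‖ < (2:ℝ) ^ (j + 1) ∧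
       (2:ℝ) ^ (j - ℓ) ≤ |p.2 - c.2| - ‖p.1 - c.1‖ ∧
       |p.2 - c.2| - ‖p.1 - c.1‖ < (2:ℝ) ^ (j - ℓ + 1)}

/-- The dyadic enlargement `Λ*_{ℓj}(x,t)`. -/
def shellStarAt (n : ℕ) (ℓ j : ℤ) (c : Pt n) : Set (Pt n) :=
  {p | (2:ℝ) ^ (j - 3) ≤ |p.2 - c.2| + ‖p.1 - c.1‖ ∧
       |p.2 - c.2| + ‖p.1 - c.1‖ < (2:ℝ) ^ (j + 3) ∧
       (2:ℝ) ^ (j - ℓ - 3) ≤ |p.2 - c.2| - ‖p.1 - c.1‖ ∧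
       |p.2 - c.2| - ‖p.1 - c.1‖ < (2:ℝ) ^ (j - ℓ + 3)}

/-- The cone shell `Λ_{ℓj}` (centered at the origin). -/
def shell (n : ℕ) (ℓ j : ℤ) : Set (Pt n) := shellAt n ℓ j 0

/-- The discrete dyadic cone `Λ_ℓ = ⋃_j Λ_{ℓj}`. -/
def Lam (n : ℕ) (ℓ : ℤ) : Set (Pt n) := ⋃ j : ℤ, shell n ℓ j

/-- The partial operator `Δ_{ℓj} I_α f`. -/
def Dlj (n : ℕ) (α : ℝ) (ℓ j : ℤ) (f : Pt n → ℝ) (z : Pt n) : ℝ≥0∞ :=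
  ∫⁻ p in shell n ℓ j, ker n α f z p

/-- The partial operator `Δ_ℓ I_α f`. -/
def Dl (n : ℕ) (α : ℝ) (ℓ : ℤ) (f : Pt n → ℝ) (z : Pt n) : ℝ≥0∞ :=
  ∫⁻ p in Lam n ℓ, ker n α f z p

/-- `θ_ℓ(x,t) = ‖f‖_p^{−p} ∬_{Λ_ℓ} f(x−y,t−s)^p dy ds`. -/
def theta (n : ℕ) (p : ℝ) (f : Pt n → ℝ) (ℓ : ℤ) (z : Pt n) : ℝ≥0∞ :=
  (∫⁻ w in Lam n ℓ, ENNReal.ofReal (f (z.1 - w.1, z.2 - w.2)) ^ p) /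
    eLpNorm f (ENNReal.ofReal p) volume ^ p

/-- The cone of directions `Γ^ν_η` with central direction `e`. -/
def coneDir (n η : ℕ) (e : EuclideanSpace ℝ (Fin n)) : Set (EuclideanSpace ℝ (Fin n)) :=
  {y | y ≠ 0 ∧ ‖(‖y‖⁻¹ • y) - e‖ ≤ 4 * (2:ℝ) ^ (-(η:ℝ))}

/-- The directional maximal operator `M^ν_η`. -/
def Mnu (n η : ℕ) (e : EuclideanSpace ℝ (Fin n)) (f : Pt n → ℝ) (z : Pt n) : ℝ≥0∞ :=
  ⨆ (ℓ : ℕ) (_ : ℓ ≤ η) (j : ℤ),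
    (ENNReal.ofReal ((2:ℝ) ^ j * (2:ℝ) ^ (j - (ℓ:ℤ)) * (2:ℝ) ^ ((j - (η:ℤ)) * ((n:ℤ) - 1))))⁻¹ *
      ∫⁻ p in {p : Pt n | p ∈ shell n ℓ j ∧ p.1 ∈ coneDir n η e},
        ENNReal.ofReal (f (z.1 - p.1, z.2 - p.2))

/-- The averaged maximal operator `M_η`. -/
def Meta (n η : ℕ) {ι : Type} [Fintype ι] (y : ι → EuclideanSpace ℝ (Fin n)) (f : Pt n → ℝ)
    (z : Pt n) : ℝ≥0∞ :=
  (ENNReal.ofReal ((2:ℝ) ^ ((η:ℤ) * ((n:ℤ) - 1))))⁻¹ * ∑ ν, Mnu n η (y ν) f z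

/-- `Ω^α(x,t) = (|t|+|x|)^{α−n} (|t|−|x|)^{α/n−1}`. -/
def Om (n : ℕ) (α : ℝ) (p : Pt n) : ℝ≥0∞ :=
  ENNReal.ofReal ((|p.2| + ‖p.1‖) ^ (α - n) * (|p.2| - ‖p.1‖) ^ (α / n - 1))

namespace ENNReal

lemma two_rpow_add (r s : ℝ) : (2 : ℝ≥0∞) ^ (r + s) = 2 ^ r * 2 ^ s :=
  rpow_add r s two_ne_zero ofNat_ne_top

lemma ofReal_two_zpow (j : ℤ) : ENNReal.ofReal ((2 : ℝ) ^ j) = 2 ^ (j : ℝ) := by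
  rw [← Real.rpow_intCast, ← ofReal_rpow_of_pos two_pos, ofReal_ofNat]

lemma exists_eq_two_rpow {a : ℝ≥0∞} (ha₀ : a ≠ 0) (ha : a ≠ ⊤) : ∃ r : ℝ, a = 2 ^ r :=
  ⟨Real.logb 2 a.toReal, by
    rw [← ofReal_ofNat, ofReal_rpow_of_pos two_pos,
      Real.rpow_logb two_pos (by norm_num) (toReal_pos ha₀ ha), ofReal_toReal ha]⟩

lemma tsum_two_rpow_natCast_mul (c : ℝ) :
    ∑' k : ℕ, (2 : ℝ≥0∞) ^ (k * c) = (1 - 2 ^ c)⁻¹ := by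
  simp_rw [mul_comm _ c, rpow_mul_natCast]
  exact tsum_geometric _

lemma div_rpow_mul_rpow_mul {A N : ℝ≥0∞} (hN₀ : N ≠ 0) (hN : N ≠ ⊤) {p s : ℝ} (hs : 0 ≤ s) :
    (A / N ^ p) ^ s * N ^ (p * s) = A ^ s := by
  rw [div_rpow_of_nonneg _ _ hs, ← ENNReal.rpow_mul,
    ENNReal.div_mul_cancel (by simp [hN₀, hN]) (by simp [hN₀, hN])]

lemma two_rpow_mul_rpow_mul_two_rpow_mul_rpow {x y θ : ℝ} (hxy : x * θ + y * (1 - θ) = 0)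
    (hθ₀ : 0 ≤ θ) (hθ₁ : θ ≤ 1) (u v : ℝ≥0∞) :
    (2 ^ x * u) ^ θ * (2 ^ y * v) ^ (1 - θ) = u ^ θ * v ^ (1 - θ) := by
  rw [mul_rpow_of_nonneg _ _ hθ₀, mul_rpow_of_nonneg _ _ (sub_nonneg.2 hθ₁), ← ENNReal.rpow_mul,
    ← ENNReal.rpow_mul, mul_mul_mul_comm, ← two_rpow_add, hxy, rpow_zero, one_mul]

lemma inv_one_sub_two_rpow_ne_top {c : ℝ} (hc : c < 0) : (1 - (2 : ℝ≥0∞) ^ c)⁻¹ ≠ ⊤ :=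
  inv_ne_top.2 (tsub_pos_of_lt (rpow_lt_one_of_one_lt_of_neg one_lt_two hc)).ne'

end ENNReal

section DyadicSums

variable {δ₁ δ₂ : ℝ}

lemma tsum_int_min_le (u v : ℤ → ℝ≥0∞) (m : ℤ) :
    ∑' j, min (u j) (v j) ≤ ∑' k : ℕ, u (m - k) + ∑' k : ℕ, v (m + 1 + k) := by
  rw [← (Equiv.addRight (m + 1)).tsum_eq,
    tsum_of_nat_of_neg_add_one ENNReal.summable ENNReal.summable, add_comm]
  gcongr with k k
  · exact (min_le_left _ _).trans_eq (by congr 1; simp; ring)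
  · exact (min_le_right _ _).trans_eq (by congr 1; simp; ring)

lemma tsum_min_two_rpow_sub_le (hδ₁ : 0 < δ₁) (hδ₂ : δ₂ < 0) (x : ℝ) :
    ∑' j : ℤ, min ((2 : ℝ≥0∞) ^ ((j - x) * δ₁)) (2 ^ ((j - x) * δ₂)) ≤
      (1 - 2 ^ (-δ₁))⁻¹ + (1 - 2 ^ δ₂)⁻¹ := by
  refine (tsum_int_min_le _ _ ⌊x⌋).trans ?_
  rw [← tsum_two_rpow_natCast_mul, ← tsum_two_rpow_natCast_mul]
  have hfloor := Int.floor_le x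
  have hceil := Int.lt_floor_add_one x
  refine add_le_add (ENNReal.tsum_le_tsum fun k ↦ ?_) (ENNReal.tsum_le_tsum fun k ↦ ?_) <;>
    exact rpow_le_rpow_of_exponent_le one_le_two (by push_cast; nlinarith)

lemma tsum_min_le_rpow_mul_rpow (hδ₁ : 0 < δ₁) (hδ₂ : δ₂ < 0) {θ : ℝ}
    (hθ : θ * δ₁ + (1 - θ) * δ₂ = 0) (a b : ℝ≥0∞) :
    ∑' j : ℤ, min (a * 2 ^ ((j : ℝ) * δ₁)) (b * 2 ^ ((j : ℝ) * δ₂)) ≤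
      ((1 - 2 ^ (-δ₁))⁻¹ + (1 - 2 ^ δ₂)⁻¹) * (a ^ θ * b ^ (1 - θ)) := by
  have hθ₀ : 0 < θ := by nlinarith
  have hθ₁ : 0 < 1 - θ := by nlinarith
  have hK : (1 - (2 : ℝ≥0∞) ^ (-δ₁))⁻¹ + (1 - 2 ^ δ₂)⁻¹ ≠ 0 := by simp
  rcases eq_or_ne a 0 with rfl | ha₀
  · simp
  rcases eq_or_ne b 0 with rfl | hb₀
  · simp
  rcases eq_or_ne a ⊤ with rfl | ha
  · have : b ^ (1 - θ) ≠ 0 := by simp [ENNReal.rpow_eq_zero_iff, hb₀, not_lt.2 hθ₁.le]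
    simp [top_rpow_of_pos hθ₀, top_mul this, mul_top hK]
  rcases eq_or_ne b ⊤ with rfl | hb
  · have : a ^ θ ≠ 0 := by simp [ENNReal.rpow_eq_zero_iff, ha₀, not_lt.2 hθ₀.le]
    simp [top_rpow_of_pos hθ₁, mul_top this, mul_top hK]
  obtain ⟨r, rfl⟩ := exists_eq_two_rpow ha₀ ha
  obtain ⟨s, rfl⟩ := exists_eq_two_rpow hb₀ hb
  -- the two sequences cross at `j = x`, where both equal `a ^ θ * b ^ (1 - θ)`
  obtain ⟨x, hx⟩ : ∃ x, x * (δ₁ - δ₂) = s - r := ⟨_, div_mul_cancel₀ _ (by linarith)⟩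
  have hterm : ∀ j : ℤ, min (2 ^ r * 2 ^ ((j : ℝ) * δ₁)) (2 ^ s * 2 ^ ((j : ℝ) * δ₂)) =
      (2 : ℝ≥0∞) ^ (θ * r + (1 - θ) * s) *
        min (2 ^ ((j - x) * δ₁)) (2 ^ ((j - x) * δ₂)) := by
    intro j
    rw [mul_min, ← two_rpow_add, ← two_rpow_add, ← two_rpow_add, ← two_rpow_add]
    congr 2
    · linear_combination (1 - θ) * hx + x * hθ
    · linear_combination (-θ) * hx + x * hθ
  calc ∑' j : ℤ, min (2 ^ r * 2 ^ ((j : ℝ) * δ₁)) (2 ^ s * 2 ^ ((j : ℝ) * δ₂))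
      = 2 ^ (θ * r + (1 - θ) * s) *
          ∑' j : ℤ, min ((2 : ℝ≥0∞) ^ ((j - x) * δ₁)) (2 ^ ((j - x) * δ₂)) := by
        simp_rw [hterm, ENNReal.tsum_mul_left]
    _ ≤ 2 ^ (θ * r + (1 - θ) * s) * ((1 - 2 ^ (-δ₁))⁻¹ + (1 - 2 ^ δ₂)⁻¹) := by
        gcongr; exact tsum_min_two_rpow_sub_le hδ₁ hδ₂ x
    _ = ((1 - 2 ^ (-δ₁))⁻¹ + (1 - 2 ^ δ₂)⁻¹) * ((2 ^ r) ^ θ * (2 ^ s) ^ (1 - θ)) := by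
        rw [← ENNReal.rpow_mul, ← ENNReal.rpow_mul, ← two_rpow_add, mul_comm, mul_comm r,
          mul_comm s]

end DyadicSums

lemma Real.volume_setOf_abs_mem_Ico_le (a b : ℝ) :
    volume {s : ℝ | |s| ∈ Set.Ico a b} ≤ 2 * ENNReal.ofReal (b - a) := by
  have hsub : {s : ℝ | |s| ∈ Set.Ico a b} ⊆ Set.Ioc (-b) (-a) ∪ Set.Ico a b := by
    rintro s ⟨has, hsb⟩
    rcases le_or_gt 0 s with hs | hs
    · rw [abs_of_nonneg hs] at has hsb; exact Or.inr ⟨has, hsb⟩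
    · rw [abs_of_neg hs] at has hsb; exact Or.inl ⟨by linarith, by linarith⟩
  calc volume {s : ℝ | |s| ∈ Set.Ico a b}
      ≤ volume (Set.Ioc (-b) (-a)) + volume (Set.Ico a b) :=
        (measure_mono hsub).trans (measure_union_le _ _)
    _ = 2 * ENNReal.ofReal (b - a) := by
        rw [Real.volume_Ioc, Real.volume_Ico, two_mul, neg_sub_neg]

lemma MeasureTheory.lintegral_le_lintegral_rpow_mul_measure_univ_rpow {X : Type*}
    [MeasurableSpace X] (μ : Measure X) {p : ℝ} (hp : 1 < p) {g : X → ℝ≥0∞}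
    (hg : AEMeasurable g μ) :
    ∫⁻ x, g x ∂μ ≤ (∫⁻ x, g x ^ p ∂μ) ^ (1 / p) * μ Set.univ ^ (1 - 1 / p) := by
  have hpq := Real.HolderConjugate.conjExponent hp
  convert ENNReal.lintegral_mul_le_Lp_mul_Lq μ hpq hg (aemeasurable_const (b := 1)) using 2 <;>
    simp [hpq.one_sub_inv]

section Shells

variable {n : ℕ}

lemma mem_shell {ℓ j : ℤ} {p : Pt n} :
    p ∈ shell n ℓ j ↔ (2 : ℝ) ^ j ≤ |p.2| + ‖p.1‖ ∧ |p.2| + ‖p.1‖ < (2 : ℝ) ^ (j + 1) ∧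
      (2 : ℝ) ^ (j - ℓ) ≤ |p.2| - ‖p.1‖ ∧ |p.2| - ‖p.1‖ < (2 : ℝ) ^ (j - ℓ + 1) := by
  simp [shell, shellAt]

lemma measurableSet_shell (ℓ j : ℤ) : MeasurableSet (shell n ℓ j) := by
  have hplus : Measurable fun p : Pt n ↦ |p.2| + ‖p.1‖ := by fun_prop
  have hminus : Measurable fun p : Pt n ↦ |p.2| - ‖p.1‖ := by fun_prop
  simp only [shell, shellAt, Prod.fst_zero, Prod.snd_zero, sub_zero, Set.ofPred_and]
  exact (measurableSet_le measurable_const hplus).inter <|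
    (measurableSet_lt hplus measurable_const).inter <|
    (measurableSet_le measurable_const hminus).inter (measurableSet_lt hminus measurable_const)

lemma pairwise_disjoint_shell (ℓ : ℤ) : Pairwise (Function.onFun Disjoint (shell n ℓ)) := by
  intro j j' hjj'
  refine Set.disjoint_left.2 fun p hp hp' ↦ hjj' ?_
  rw [mem_shell] at hp hp'
  have h₁ : j < j' + 1 := (zpow_lt_zpow_iff_right₀ (by norm_num)).1 (hp.1.trans_lt hp'.2.1)
  have h₂ : j' < j + 1 := (zpow_lt_zpow_iff_right₀ (by norm_num)).1 (hp'.1.trans_lt hp.2.1)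
  omega

lemma volume_prodMk_preimage_shell_le (ℓ j : ℤ) (y : EuclideanSpace ℝ (Fin n)) :
    volume (Prod.mk y ⁻¹' shell n ℓ j) ≤
      (Metric.ball 0 ((2 : ℝ) ^ (j + 1))).indicator
        (fun _ ↦ 2 * ENNReal.ofReal (2 ^ (j - ℓ))) y := by
  by_cases hy : ‖y‖ < (2 : ℝ) ^ (j + 1)
  · rw [Set.indicator_of_mem (mem_ball_zero_iff.2 hy)]
    refine (measure_mono fun s hs ↦ ?_).trans
      ((Real.volume_setOf_abs_mem_Ico_le (2 ^ (j - ℓ) + ‖y‖) (2 ^ (j - ℓ + 1) + ‖y‖)).trans_eq ?_)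
    · obtain ⟨-, -, h₁, h₂⟩ := mem_shell.1 hs
      exact ⟨by linarith, by linarith⟩
    · rw [zpow_add_one₀ two_ne_zero]; ring_nf
  · rw [Set.indicator_of_notMem (by simpa using hy), nonpos_iff_eq_zero,
      measure_eq_zero_iff_ae_notMem]
    refine Filter.Eventually.of_forall fun s hs ↦ hy ?_
    obtain ⟨-, h, -, -⟩ := mem_shell.1 hs
    linarith [abs_nonneg s]

lemma volume_shell_le [NeZero n] (ℓ j : ℤ) :
    volume (shell n ℓ j) ≤ 2 ^ ((j : ℝ) * (n + 1) - ℓ) *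
      (2 ^ (n + 1) * volume (Metric.ball (0 : EuclideanSpace ℝ (Fin n)) 1)) := by
  calc volume (shell n ℓ j)
      = ∫⁻ y, volume (Prod.mk y ⁻¹' shell n ℓ j) := by
        rw [Measure.volume_eq_prod, Measure.prod_apply (measurableSet_shell ℓ j)]
    _ ≤ ∫⁻ y, (Metric.ball 0 ((2 : ℝ) ^ (j + 1))).indicator
          (fun _ ↦ 2 * ENNReal.ofReal (2 ^ (j - ℓ))) y :=
        lintegral_mono (volume_prodMk_preimage_shell_le ℓ j)
    _ = 2 * ENNReal.ofReal (2 ^ (j - ℓ)) *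
          (ENNReal.ofReal (((2 : ℝ) ^ (j + 1)) ^ n) *
            volume (Metric.ball (0 : EuclideanSpace ℝ (Fin n)) 1)) := by
        rw [lintegral_indicator_const Metric.isOpen_ball.measurableSet,
          Measure.addHaar_ball _ _ (by positivity), finrank_euclideanSpace_fin]
    _ = 2 ^ ((j : ℝ) * (n + 1) - ℓ) *
          (2 ^ (n + 1) * volume (Metric.ball (0 : EuclideanSpace ℝ (Fin n)) 1)) := by
        rw [ENNReal.ofReal_pow (by positivity), ofReal_two_zpow, ofReal_two_zpow,
          ← ENNReal.rpow_mul_natCast, ← ENNReal.rpow_natCast, ← mul_assoc, ← mul_assoc]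
        nth_rw 1 [← ENNReal.rpow_one (2 : ℝ≥0∞)]
        rw [← two_rpow_add, ← two_rpow_add, ← two_rpow_add]
        congr 2
        push_cast
        ring

end Shells

section Estimates

variable {n : ℕ} {α : ℝ} {f : Pt n → ℝ} {z : Pt n}

lemma Dl_eq_tsum_Dlj (ℓ : ℤ) : Dl n α ℓ f z = ∑' j : ℤ, Dlj n α ℓ j f z :=
  lintegral_iUnion (measurableSet_shell ℓ) (pairwise_disjoint_shell ℓ) _

lemma ker_le_of_mem_shell (hαn : α ≤ n) {ℓ j : ℤ} {w : Pt n} (hw : w ∈ shell n ℓ j) :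
    ker n α f z w ≤ 2 ^ ((j : ℝ) * (α - n) + (j - ℓ) * (α / n - 1)) *
      ENNReal.ofReal (f (z.1 - w.1, z.2 - w.2)) := by
  obtain ⟨h₁, -, h₃, -⟩ := mem_shell.1 hw
  have hpos₁ : (0 : ℝ) < 2 ^ j := by positivity
  have hpos₂ : (0 : ℝ) < 2 ^ (j - ℓ) := by positivity
  have hweight : (|w.2| + ‖w.1‖) ^ (α - n) * (|w.2| - ‖w.1‖) ^ (α / n - 1) ≤
      ((2 : ℝ) ^ j) ^ (α - n) * ((2 : ℝ) ^ (j - ℓ)) ^ (α / n - 1) :=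
    mul_le_mul (Real.rpow_le_rpow_of_nonpos hpos₁ h₁ (by linarith))
      (Real.rpow_le_rpow_of_nonpos hpos₂ h₃ (by linarith [div_le_one_of_le₀ hαn n.cast_nonneg]))
      (Real.rpow_nonneg (hpos₂.le.trans h₃) _) (by positivity)
  rw [ker, mul_comm]
  gcongr
  refine (ENNReal.ofReal_le_ofReal hweight).trans_eq ?_
  rw [ENNReal.ofReal_mul (by positivity), ← ENNReal.ofReal_rpow_of_pos hpos₁,
    ← ENNReal.ofReal_rpow_of_pos hpos₂, ofReal_two_zpow, ofReal_two_zpow, ← ENNReal.rpow_mul,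
    ← ENNReal.rpow_mul, ← two_rpow_add]
  norm_cast

lemma Dlj_le_two_rpow_mul_setLIntegral (hαn : α ≤ n) (ℓ j : ℤ) :
    Dlj n α ℓ j f z ≤ 2 ^ ((j : ℝ) * (α - n) + (j - ℓ) * (α / n - 1)) *
      ∫⁻ w in shell n ℓ j, ENNReal.ofReal (f (z.1 - w.1, z.2 - w.2)) := by
  rw [Dlj, ← lintegral_const_mul' _ _ (by simp)]
  exact setLIntegral_mono' (measurableSet_shell ℓ j) fun w hw ↦ ker_le_of_mem_shell hαn hw

lemma ae_fst_ne_zero [NeZero n] : ∀ᵐ w : Pt n, w.1 ≠ 0 := by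
  rw [Measure.volume_eq_prod]
  exact Measure.quasiMeasurePreserving_fst.ae (Measure.ae_ne volume 0)

lemma setLIntegral_shell_le_Meta [NeZero n] {η : ℕ} {ι : Type} [Fintype ι]
    {y : ι → EuclideanSpace ℝ (Fin n)}
    (hcover : ∀ w : EuclideanSpace ℝ (Fin n), w ≠ 0 → ∃ ν, w ∈ coneDir n η (y ν))
    {ℓ : ℕ} (hℓ : ℓ ≤ η) (j : ℤ) :
    ∫⁻ w in shell n ℓ j, ENNReal.ofReal (f (z.1 - w.1, z.2 - w.2)) ≤
      2 ^ ((j : ℝ) * (n + 1) - ℓ) * Meta n η y f z := by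
  set S : ι → Set (Pt n) := fun ν ↦ {w | w ∈ shell n ℓ j ∧ w.1 ∈ coneDir n η (y ν)}
  set Nj : ℝ := 2 ^ j * 2 ^ (j - (ℓ : ℤ)) * 2 ^ ((j - (η : ℤ)) * ((n : ℤ) - 1))
  set Nη : ℝ := 2 ^ ((η : ℤ) * ((n : ℤ) - 1))
  have hcovered : shell n ℓ j ≤ᵐ[volume] ⋃ ν, S ν := by
    filter_upwards [ae_fst_ne_zero] with w hw hmem
    obtain ⟨ν, hν⟩ := hcover w.1 hw
    exact Set.mem_iUnion.2 ⟨ν, hmem, hν⟩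
  have hpiece : ∀ ν, ∫⁻ w in S ν, ENNReal.ofReal (f (z.1 - w.1, z.2 - w.2)) ≤
      ENNReal.ofReal Nj * Mnu n η (y ν) f z := fun ν ↦
    (ENNReal.inv_mul_le_iff (ENNReal.ofReal_pos.2 (by positivity)).ne' ENNReal.ofReal_ne_top).1 <|
      le_iSup_of_le ℓ <| le_iSup_of_le hℓ <| le_iSup_of_le j le_rfl
  have hweights : ENNReal.ofReal Nj * ENNReal.ofReal Nη = 2 ^ ((j : ℝ) * (n + 1) - ℓ) := by
    have h2 : (2 : ℝ) ≠ 0 := two_ne_zero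
    simp only [Nj, Nη]
    rw [← ENNReal.ofReal_mul (by positivity), ← zpow_add₀ h2, ← zpow_add₀ h2, ← zpow_add₀ h2,
      ofReal_two_zpow]
    push_cast
    ring_nf
  calc ∫⁻ w in shell n ℓ j, ENNReal.ofReal (f (z.1 - w.1, z.2 - w.2))
      ≤ ∑' ν, ∫⁻ w in S ν, ENNReal.ofReal (f (z.1 - w.1, z.2 - w.2)) :=
        (lintegral_mono_set' hcovered).trans (lintegral_iUnion_le _ _)
    _ ≤ ∑ ν, ENNReal.ofReal Nj * Mnu n η (y ν) f z := by
        rw [tsum_fintype]; exact Finset.sum_le_sum fun ν _ ↦ hpiece ν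
    _ = 2 ^ ((j : ℝ) * (n + 1) - ℓ) * Meta n η y f z := by
        rw [← Finset.mul_sum, Meta, ← hweights, mul_assoc,
          ENNReal.mul_inv_cancel_left (ENNReal.ofReal_pos.2 (by positivity)).ne' ENNReal.ofReal_ne_top]

lemma Dlj_le_Meta [NeZero n] (hαn : α ≤ n) {η : ℕ} {ι : Type} [Fintype ι]
    {y : ι → EuclideanSpace ℝ (Fin n)}
    (hcover : ∀ w : EuclideanSpace ℝ (Fin n), w ≠ 0 → ∃ ν, w ∈ coneDir n η (y ν))
    {ℓ : ℕ} (hℓ : ℓ ≤ η) (j : ℤ) :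
    Dlj n α ℓ j f z ≤
      2 ^ (-(ℓ : ℝ) * (α / n)) * Meta n η y f z * 2 ^ ((j : ℝ) * (α + α / n)) := by
  calc Dlj n α ℓ j f z
      ≤ 2 ^ ((j : ℝ) * (α - n) + (j - ℓ) * (α / n - 1)) *
          (2 ^ ((j : ℝ) * (n + 1) - ℓ) * Meta n η y f z) := by
        refine (Dlj_le_two_rpow_mul_setLIntegral hαn ℓ j).trans ?_
        gcongr _ * ?_
        exact setLIntegral_shell_le_Meta hcover hℓ j
    _ = 2 ^ (-(ℓ : ℝ) * (α / n)) * Meta n η y f z * 2 ^ ((j : ℝ) * (α + α / n)) := by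
        rw [← mul_assoc, ← two_rpow_add, mul_right_comm, ← two_rpow_add]
        congr 2
        ring

lemma Dlj_le_lintegral_rpow [NeZero n] (hαn : α ≤ n) {p : ℝ} (hp : 1 < p) (hf : Measurable f)
    (ℓ j : ℤ) :
    Dlj n α ℓ j f z ≤
      2 ^ ((ℓ : ℝ) * (1 / p - α / n)) *
        ((2 ^ (n + 1) * volume (Metric.ball (0 : EuclideanSpace ℝ (Fin n)) 1)) ^ (1 - 1 / p) *
          (∫⁻ w in Lam n ℓ, ENNReal.ofReal (f (z.1 - w.1, z.2 - w.2)) ^ p) ^ (1 / p)) *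
        2 ^ ((j : ℝ) * (α + α / n - (n + 1) / p)) := by
  set c := 2 ^ (n + 1) * volume (Metric.ball (0 : EuclideanSpace ℝ (Fin n)) 1)
  set A := ∫⁻ w in Lam n ℓ, ENNReal.ofReal (f (z.1 - w.1, z.2 - w.2)) ^ p
  have hexp : 0 ≤ 1 - 1 / p := by
    rw [sub_nonneg, div_le_one (by linarith)]; exact hp.le
  have hg : Measurable fun w : Pt n ↦ ENNReal.ofReal (f (z.1 - w.1, z.2 - w.2)) := by fun_prop
  have hHolder : ∫⁻ w in shell n ℓ j, ENNReal.ofReal (f (z.1 - w.1, z.2 - w.2)) ≤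
      A ^ (1 / p) * volume (shell n ℓ j) ^ (1 - 1 / p) := by
    refine (lintegral_le_lintegral_rpow_mul_measure_univ_rpow _ hp hg.aemeasurable).trans ?_
    rw [Measure.restrict_apply_univ]
    gcongr
    exact lintegral_mono_set (Set.subset_iUnion (shell n ℓ) j)
  calc Dlj n α ℓ j f z
      ≤ 2 ^ ((j : ℝ) * (α - n) + (j - ℓ) * (α / n - 1)) *
          (A ^ (1 / p) * (2 ^ ((j : ℝ) * (n + 1) - ℓ) * c) ^ (1 - 1 / p)) := by
        refine (Dlj_le_two_rpow_mul_setLIntegral hαn ℓ j).trans ?_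
        gcongr _ * ?_
        exact hHolder.trans (by gcongr; exact volume_shell_le ℓ j)
    _ = 2 ^ ((j : ℝ) * (α - n) + (j - ℓ) * (α / n - 1) + ((j : ℝ) * (n + 1) - ℓ) * (1 - 1 / p)) *
          (c ^ (1 - 1 / p) * A ^ (1 / p)) := by
        rw [ENNReal.mul_rpow_of_nonneg _ _ hexp, ← ENNReal.rpow_mul,
          two_rpow_add (_ + _) (((j : ℝ) * (n + 1) - ℓ) * (1 - 1 / p))]
        ring
    _ = 2 ^ ((ℓ : ℝ) * (1 / p - α / n)) * (c ^ (1 - 1 / p) * A ^ (1 / p)) *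
          2 ^ ((j : ℝ) * (α + α / n - (n + 1) / p)) := by
        rw [mul_right_comm, ← two_rpow_add]
        congr 2
        ring

lemma add_div_sub_div_eq_neg_div [NeZero n] {p q : ℝ} (hform : α / n = 1 / p - 1 / q) :
    α + α / n - (n + 1) / p = -((n + 1) / q) := by
  have hn₀ : (n : ℝ) ≠ 0 := Nat.cast_ne_zero.2 (NeZero.ne n)
  rw [show α = n * (α / n) by field_simp, hform]
  field_simp
  ring

lemma Dl_le_lintegral_rpow_mul_Meta_rpow [NeZero n] (hα₀ : 0 < α) (hαn : α < n) {p q : ℝ}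
    (hp : 1 < p) (hpq : p < q) (hform : α / n = 1 / p - 1 / q) {η : ℕ} {ι : Type} [Fintype ι]
    {y : ι → EuclideanSpace ℝ (Fin n)}
    (hcover : ∀ w : EuclideanSpace ℝ (Fin n), w ≠ 0 → ∃ ν, w ∈ coneDir n η (y ν))
    (hf : Measurable f) {ℓ : ℕ} (hℓ : ℓ ≤ η) :
    Dl n α ℓ f z ≤
      ((1 - 2 ^ (-(α + α / n)))⁻¹ + (1 - 2 ^ (α + α / n - (n + 1) / p))⁻¹) *
        ((2 ^ (n + 1) * volume (Metric.ball (0 : EuclideanSpace ℝ (Fin n)) 1)) ^ (1 - 1 / p)) ^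
          (1 - p / q) *
        ((∫⁻ w in Lam n ℓ, ENNReal.ofReal (f (z.1 - w.1, z.2 - w.2)) ^ p) ^ (1 / p - 1 / q) *
          Meta n η y f z ^ (p / q)) := by
  set c := (2 ^ (n + 1) * volume (Metric.ball (0 : EuclideanSpace ℝ (Fin n)) 1)) ^ (1 - 1 / p)
  set A := ∫⁻ w in Lam n ℓ, ENNReal.ofReal (f (z.1 - w.1, z.2 - w.2)) ^ p
  have hp₀ : 0 < p := by linarith
  have hq₀ : 0 < q := by linarith
  have hθ₁ : p / q ≤ 1 := (div_le_one hq₀).2 hpq.le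
  have hδ₂ := add_div_sub_div_eq_neg_div hform
  have hδ₁ : α + α / n = (n + 1) / p - (n + 1) / q := by linarith
  have hsum := tsum_min_le_rpow_mul_rpow (δ₁ := α + α / n) (δ₂ := α + α / n - (n + 1) / p)
    (θ := p / q) (by positivity) (hδ₂ ▸ neg_neg_of_pos (by positivity))
    (by rw [hδ₁]; field_simp; ring)
    (2 ^ (-(ℓ : ℝ) * (α / n)) * Meta n η y f z)
    (2 ^ ((ℓ : ℝ) * (1 / p - α / n)) * (c * A ^ (1 / p)))
  rw [ENNReal.two_rpow_mul_rpow_mul_two_rpow_mul_rpow (by rw [hform]; field_simp; ring)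
    (by positivity) hθ₁, ENNReal.mul_rpow_of_nonneg _ _ (sub_nonneg.2 hθ₁), ← ENNReal.rpow_mul A,
    show 1 / p * (1 - p / q) = 1 / p - 1 / q by field_simp] at hsum
  calc Dl n α ℓ f z = ∑' j : ℤ, Dlj n α ℓ j f z := Dl_eq_tsum_Dlj _
    _ ≤ _ := ENNReal.tsum_le_tsum fun j ↦
        le_min (Dlj_le_Meta hαn.le hcover hℓ j) (Dlj_le_lintegral_rpow hαn.le hp hf ℓ j)
    _ ≤ _ := hsum
    _ = _ := by ring

lemma exists_Dl_le_lintegral_rpow_mul_Meta_rpow [NeZero n] (hα₀ : 0 < α) (hαn : α < n)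
    {p q : ℝ} (hp : 1 < p) (hpq : p < q) (hform : α / n = 1 / p - 1 / q) :
    ∃ C : ℝ≥0, 0 < C ∧ ∀ (η : ℕ) (ι : Type) [Fintype ι] (y : ι → EuclideanSpace ℝ (Fin n)),
      (∀ w : EuclideanSpace ℝ (Fin n), w ≠ 0 → ∃ ν, w ∈ coneDir n η (y ν)) →
      ∀ f : Pt n → ℝ, Measurable f → ∀ ℓ : ℕ, ℓ ≤ η → ∀ z : Pt n,
        Dl n α ℓ f z ≤ C *
          ((∫⁻ w in Lam n ℓ, ENNReal.ofReal (f (z.1 - w.1, z.2 - w.2)) ^ p) ^ (1 / p - 1 / q) *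
            Meta n η y f z ^ (p / q)) := by
  set c := (2 ^ (n + 1) * volume (Metric.ball (0 : EuclideanSpace ℝ (Fin n)) 1)) ^ (1 - 1 / p)
  set K : ℝ≥0∞ := (1 - 2 ^ (-(α + α / n)))⁻¹ + (1 - 2 ^ (α + α / n - (n + 1) / p))⁻¹
  have hq₀ : 0 < q := by linarith
  have hθ : 0 ≤ 1 - p / q := sub_nonneg.2 ((div_le_one hq₀).2 hpq.le)
  have hball : 2 ^ (n + 1) * volume (Metric.ball (0 : EuclideanSpace ℝ (Fin n)) 1) ≠ ⊤ :=
    ENNReal.mul_ne_top (by simp) measure_ball_lt_top.ne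
  have hc_top : c ≠ ⊤ :=
    ENNReal.rpow_ne_top_of_nonneg (by simpa using inv_le_one_of_one_le₀ hp.le) hball
  have hc_pos : 0 < c :=
    ENNReal.rpow_pos (ENNReal.mul_pos (by simp) (Metric.measure_ball_pos _ _ one_pos).ne') hball
  have hK : K ≠ ⊤ := ENNReal.add_ne_top.2
    ⟨ENNReal.inv_one_sub_two_rpow_ne_top (neg_neg_of_pos (by positivity)),
      ENNReal.inv_one_sub_two_rpow_ne_top
        ((add_div_sub_div_eq_neg_div hform).trans_lt (neg_neg_of_pos (by positivity)))⟩
  have hC : K * c ^ (1 - p / q) ≠ ⊤ :=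
    ENNReal.mul_ne_top hK (ENNReal.rpow_ne_top_of_nonneg hθ hc_top)
  refine ⟨(K * c ^ (1 - p / q)).toNNReal, ENNReal.toNNReal_pos
    (mul_ne_zero (by simp [K]) (ENNReal.rpow_pos hc_pos hc_top).ne') hC,
    fun η ι _ y hcover f hf ℓ hℓ z ↦ ?_⟩
  rw [ENNReal.coe_toNNReal hC]
  exact Dl_le_lintegral_rpow_mul_Meta_rpow hα₀ hαn hp hpq hform hcover hf hℓ

end Estimates

theorem stmt12_general (n : ℕ) (hn : 2 ≤ n) (α : ℝ) (hα0 : 0 < α) (hαn : α < n)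
    (p q : ℝ) (hp : 1 < p) (hpq : p < q) (hform : α / n = 1 / p - 1 / q)
    (C₀ : ℝ) :
    ∃ C : ℝ≥0, 0 < C ∧ ∀ (η : ℕ), 1 ≤ η →
      ∀ (ι : Type) [Fintype ι] (y : ι → EuclideanSpace ℝ (Fin n)),
      (∀ ν, ‖y ν‖ = 1) →
      (∀ w : EuclideanSpace ℝ (Fin n), w ≠ 0 → ∃ ν, w ∈ coneDir n η (y ν)) →
      ((Fintype.card ι : ℝ) ≤ C₀ * (2:ℝ) ^ ((η:ℤ) * ((n:ℤ) - 1))) →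
      ∀ f : Pt n → ℝ, Measurable f → (∀ z, 0 ≤ f z) →
        MemLp f (ENNReal.ofReal p) volume → eLpNorm f (ENNReal.ofReal p) volume ≠ 0 →
      ∀ (ℓ : ℕ), ℓ ≤ η →
      ∀ᵐ z : Pt n ∂volume,
        Dl n α (ℓ:ℤ) f z ≤
          C * theta n p f (ℓ:ℤ) z ^ (1 / p - 1 / q) * Meta n η y f z ^ (p / q) *
            eLpNorm f (ENNReal.ofReal p) volume ^ (1 - p / q) := by
  have : NeZero n := ⟨by omega⟩
  obtain ⟨C, hC, hDl⟩ := exists_Dl_le_lintegral_rpow_mul_Meta_rpow hα0 hαn hp hpq hform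
  refine ⟨C, hC, fun η _ ι _ y _ hcover _ f hf _ hmem hN ℓ hℓ ↦ .of_forall fun z ↦ ?_⟩
  have hs : 0 ≤ 1 / p - 1 / q := hform ▸ by positivity
  rw [theta, mul_right_comm _ _ (Meta n η y f z ^ _), mul_assoc _ _ (eLpNorm f _ _ ^ _),
    show 1 - p / q = p * (1 / p - 1 / q) by field_simp,
    ENNReal.div_rpow_mul_rpow_mul hN hmem.eLpNorm_ne_top hs, mul_assoc,
    mul_comm (Meta n η y f z ^ _)]
  exact hDl η ι y hcover f hf ℓ hℓ z

theorem stmt12 (n : ℕ) (hn : 2 ≤ n) (α : ℝ) (hα0 : 0 < α) (hαn : α < n)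
    (p q : ℝ) (hp : 1 < p) (hpq : p < q) (hform : α / n = 1 / p - 1 / q)
    (C₀ : ℝ) (hC₀ : 1 ≤ C₀) :
    ∃ C : ℝ≥0, 0 < C ∧ ∀ (η : ℕ), 1 ≤ η →
      ∀ (ι : Type) [Fintype ι] (y : ι → EuclideanSpace ℝ (Fin n)),
      (∀ ν, ‖y ν‖ = 1) →
      (∀ w : EuclideanSpace ℝ (Fin n), w ≠ 0 → ∃ ν, w ∈ coneDir n η (y ν)) →
      ((Fintype.card ι : ℝ) ≤ C₀ * (2:ℝ) ^ ((η:ℤ) * ((n:ℤ) - 1))) →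
      ∀ f : Pt n → ℝ, Measurable f → (∀ z, 0 ≤ f z) →
        MemLp f (ENNReal.ofReal p) volume → eLpNorm f (ENNReal.ofReal p) volume ≠ 0 →
      ∀ (ℓ : ℕ), ℓ ≤ η →
      ∀ᵐ z : Pt n ∂volume,
        Dl n α (ℓ:ℤ) f z ≤
          C * theta n p f (ℓ:ℤ) z ^ (1 / p - 1 / q) * Meta n η y f z ^ (p / q) *
            eLpNorm f (ENNReal.ofReal p) volume ^ (1 - p / q) :=
  stmt12_general n hn α hα0 hαn p q hp hpq hform C₀
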